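/- arXiv:2211.00260 — 2 statements merged into one kernel-verified Lean document; each statement's English description precedes it below -/
import Mathlib

section
/- Let S(s) = ∑_{n ≤ N} a_n n^{-s} and S_u(s) = ∑_{2 ≤ n ≤ u} a_n n^{-s}. Then for any real σ₀ ≤ σ and t ∈ ℝ, |S(σ+it)|² ≪ |a_1|² + |S(σ₀+it)|² + ∫_2^N |S_u(σ₀+it)|² du/(u log u), with an absolute implied constant. -/
/-!
Put `b n = a n * n ^ (-(σ₀ + I t))` and `δ = σ - σ₀ ≥ 0`, so that `S(σ + it) = ∑ b n * n ^ (-δ)`.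
Abel summation against `u ^ (-δ)` gives
`S(σ + it) = a 1 + N ^ (-δ) * (S(σ₀ + it) - a 1) + δ ∫₂ᴺ S_u(σ₀ + it) u ^ (-δ - 1) du`.
By Cauchy–Schwarz with weight `u log u`, the square of the integral term is at most
`∫₂ᴺ |S_u(σ₀ + it)|² du / (u log u)` times `∫₂ᴺ δ² u ^ (-2δ - 1) log u du`, and the latter is
at most `∫₂ᴺ δ u ^ (-δ - 1) du ≤ 1` because `δ log u ≤ u ^ δ`. This gives the bound with `C = 12`.
-/

open Complex Finset MeasureTheory

theorem sq_norm_integral_smul_le {α E : Type*} [MeasurableSpace α] {μ : Measure α}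
    [NormedAddCommGroup E] [NormedSpace ℝ E] {g w : α → ℝ} {T : α → E}
    (hw : ∀ᵐ x ∂μ, 0 < w x) (hTw : Integrable (fun x ↦ ‖T x‖ ^ 2 / w x) μ)
    (hgw : Integrable (fun x ↦ g x ^ 2 * w x) μ) :
    ‖∫ x, g x • T x ∂μ‖ ^ 2 ≤ (∫ x, ‖T x‖ ^ 2 / w x ∂μ) * ∫ x, g x ^ 2 * w x ∂μ := by
  set A := ‖∫ x, g x • T x ∂μ‖
  set X := ∫ x, ‖T x‖ ^ 2 / w x ∂μ
  set Y := ∫ x, g x ^ 2 * w x ∂μ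
  have hX : 0 ≤ X := integral_nonneg_of_ae <| hw.mono fun x hx ↦ by positivity
  have hY : 0 ≤ Y := integral_nonneg_of_ae <| hw.mono fun x hx ↦ by positivity
  -- the pointwise inequality `2ε|g|‖T‖ ≤ ε²‖T‖²/w + g²w` is `(ε‖T‖ - |g|w)² ≥ 0`
  have hquad : ∀ ε : ℝ, 0 ≤ X * (ε * ε) + (-2 * A) * ε + Y := by
    intro ε
    rcases lt_or_ge ε 0 with hε | hε
    · nlinarith [norm_nonneg (∫ x, g x • T x ∂μ)]
    have hpt : ∀ᵐ x ∂μ, 2 * ε * ‖g x • T x‖ ≤ ε ^ 2 * (‖T x‖ ^ 2 / w x) + g x ^ 2 * w x := by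
      filter_upwards [hw] with x hx
      rw [norm_smul, Real.norm_eq_abs, ← sub_nonneg]
      have : ε ^ 2 * (‖T x‖ ^ 2 / w x) + g x ^ 2 * w x - 2 * ε * (|g x| * ‖T x‖)
          = (ε * ‖T x‖ - |g x| * w x) ^ 2 / w x := by
        field_simp
        rw [← sq_abs (g x)]
        ring
      rw [this]
      positivity
    have hint := integral_mono_of_nonneg (Filter.Eventually.of_forall fun x ↦ by positivity)
      ((hTw.const_mul (ε ^ 2)).add hgw) hpt
    simp only [Pi.add_apply] at hint
    rw [integral_const_mul, integral_add (hTw.const_mul _) hgw, integral_const_mul] at hint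
    have := norm_integral_le_integral_norm (μ := μ) fun x ↦ g x • T x
    nlinarith
  have := discrim_le_zero hquad
  rw [discrim] at this
  nlinarith

theorem hasDerivAt_ofReal_rpow_neg (δ : ℝ) {u : ℝ} (hu : 0 < u) :
    HasDerivAt (fun t : ℝ ↦ ((t ^ (-δ) : ℝ) : ℂ)) ((-δ * u ^ (-δ - 1) : ℝ) : ℂ) u :=
  (Real.hasDerivAt_rpow_const (Or.inl hu.ne')).ofReal_comp

theorem sum_Icc_two_mul_rpow_neg (c : ℕ → ℂ) (N : ℕ) (δ : ℝ) :
    ∑ n ∈ Finset.Icc 2 N, c n * ((n : ℝ) ^ (-δ) : ℝ) =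
      ((N : ℝ) ^ (-δ) : ℝ) * ∑ n ∈ Finset.Icc 2 N, c n +
        ∫ u in Set.Ioc 2 (N : ℝ), ((δ * u ^ (-δ - 1) : ℝ) : ℂ) * ∑ n ∈ Finset.Icc 2 ⌊u⌋₊, c n := by
  have hsum (F : ℕ → ℂ) (m : ℕ) :
      ∑ k ∈ Finset.Icc 0 m, (if 2 ≤ k then F k else 0) = ∑ k ∈ Finset.Icc 2 m, F k := by
    rw [← sum_filter]
    congr 1
    ext k
    simp only [mem_filter, Finset.mem_Icc]
    omega
  have hderiv : ∀ t ∈ Set.Icc (2 : ℝ) N, HasDerivAt (fun t : ℝ ↦ ((t ^ (-δ) : ℝ) : ℂ))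
      ((-δ * t ^ (-δ - 1) : ℝ) : ℂ) t := fun t ht ↦
    hasDerivAt_ofReal_rpow_neg δ (by linarith [ht.1])
  have hcont : ContinuousOn (fun t : ℝ ↦ ((-δ * t ^ (-δ - 1) : ℝ) : ℂ)) (Set.Icc 2 N) :=
    Complex.continuous_ofReal.comp_continuousOn <| continuousOn_const.mul <|
      continuousOn_id.rpow_const fun t ht ↦ Or.inl (show (0 : ℝ) < t by linarith [ht.1]).ne'
  have habel := sum_mul_eq_sub_integral_mul₁ (fun k ↦ if 2 ≤ k then c k else 0)
    (by simp) (by simp) (N : ℝ) (fun t ht ↦ (hderiv t ht).differentiableAt)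
    ((hcont.congr fun t ht ↦ (hderiv t ht).deriv).integrableOn_Icc)
  simp only [Nat.floor_natCast, mul_ite, mul_zero, hsum] at habel
  rw [sum_congr rfl fun n _ ↦ mul_comm _ _, habel, sub_eq_add_neg, ← integral_neg]
  congr 1
  refine setIntegral_congr_fun measurableSet_Ioc fun t ht ↦ ?_
  rw [(hderiv t (Set.Ioc_subset_Icc_self ht)).deriv]
  push_cast
  ring

theorem norm_sum_Icc_floor_le (c : ℕ → ℂ) {N : ℕ} {u : ℝ} (hu : u ≤ N) :
    ‖∑ n ∈ Finset.Icc 2 ⌊u⌋₊, c n‖ ≤ ∑ n ∈ Finset.Icc 2 N, ‖c n‖ :=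
  (norm_sum_le _ _).trans <| sum_le_sum_of_subset_of_nonneg
    (Finset.Icc_subset_Icc_right (Nat.floor_le_of_le hu)) fun _ _ _ ↦ norm_nonneg _

theorem integrableOn_norm_sum_Icc_floor_sq_div (c : ℕ → ℂ) (N : ℕ) :
    IntegrableOn (fun u ↦ ‖∑ n ∈ Finset.Icc 2 ⌊u⌋₊, c n‖ ^ 2 / (u * Real.log u))
      (Set.Ioc 2 N) := by
  have hmeas : Measurable fun u : ℝ ↦ ∑ n ∈ Finset.Icc 2 ⌊u⌋₊, c n :=
    (measurable_from_nat (f := fun k ↦ ∑ n ∈ Finset.Icc 2 k, c n)).comp Nat.measurable_floor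
  refine Measure.integrableOn_of_bounded (M := (∑ n ∈ Finset.Icc 2 N, ‖c n‖) ^ 2)
    measure_Ioc_lt_top.ne ?_ ((ae_restrict_iff' measurableSet_Ioc).2 (ae_of_all _ ?_))
  · exact ((hmeas.norm.pow_const 2).div
      (measurable_id.mul Real.measurable_log)).aestronglyMeasurable
  intro u hu
  have hlog : 1 ≤ u * Real.log u := by
    have := Real.log_le_log two_pos hu.1.le
    nlinarith [Real.log_two_gt_d9, hu.1]
  rw [Real.norm_eq_abs, abs_of_nonneg (by positivity)]
  exact (div_le_self (sq_nonneg _) hlog).trans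
    (pow_le_pow_left₀ (norm_nonneg _) (norm_sum_Icc_floor_le c hu.2) 2)

theorem mul_rpow_neg_sub_one_sq_mul_log_le {δ u : ℝ} (hδ : 0 ≤ δ) (hu : 0 < u) :
    (δ * u ^ (-δ - 1)) ^ 2 * (u * Real.log u) ≤ δ * u ^ (-δ - 1) := by
  have hlog : δ * Real.log u * u ^ (-δ) ≤ 1 := by
    have h := Real.add_one_le_exp (Real.log u * δ)
    rw [← Real.rpow_def_of_pos hu] at h
    calc δ * Real.log u * u ^ (-δ) ≤ u ^ δ * u ^ (-δ) := by gcongr; linarith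
      _ = 1 := by rw [← Real.rpow_add hu, add_neg_cancel, Real.rpow_zero]
  have hsplit : u ^ (-δ - 1) * u = u ^ (-δ) := by
    rw [← Real.rpow_add_one hu.ne', sub_add_cancel]
  calc (δ * u ^ (-δ - 1)) ^ 2 * (u * Real.log u)
      = δ * u ^ (-δ - 1) * (δ * Real.log u * (u ^ (-δ - 1) * u)) := by ring
    _ ≤ δ * u ^ (-δ - 1) * 1 := by rw [hsplit]; gcongr
    _ = δ * u ^ (-δ - 1) := mul_one _

theorem setIntegral_mul_rpow_neg_sub_one (δ : ℝ) {b : ℝ} (hb : 2 ≤ b) :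
    ∫ u in Set.Ioc 2 b, δ * u ^ (-δ - 1) = 2 ^ (-δ) - b ^ (-δ) := by
  rw [← intervalIntegral.integral_of_le hb]
  have hderiv : ∀ u ∈ Set.uIcc 2 b, HasDerivAt (fun u : ℝ ↦ -u ^ (-δ)) (δ * u ^ (-δ - 1)) u := by
    intro u hu
    rw [Set.uIcc_of_le hb] at hu
    have h := (Real.hasDerivAt_rpow_const (x := u) (p := -δ) (Or.inl (by linarith [hu.1]))).neg
    rwa [neg_mul, neg_neg] at h
  rw [intervalIntegral.integral_eq_sub_of_hasDerivAt hderiv]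
  · ring
  · exact ContinuousOn.intervalIntegrable <| continuousOn_const.mul <|
      continuousOn_id.rpow_const fun u hu ↦ Or.inl
        (show (0 : ℝ) < u by rw [Set.uIcc_of_le hb] at hu; linarith [hu.1]).ne'

theorem sq_norm_setIntegral_mul_rpow_neg_sub_one_mul_le {δ b : ℝ} (hδ : 0 ≤ δ) (hb : 2 ≤ b)
    {T : ℝ → ℂ}
    (hT : IntegrableOn (fun u ↦ ‖T u‖ ^ 2 / (u * Real.log u)) (Set.Ioc 2 b)) :
    ‖∫ u in Set.Ioc 2 b, ((δ * u ^ (-δ - 1) : ℝ) : ℂ) * T u‖ ^ 2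
      ≤ ∫ u in Set.Ioc 2 b, ‖T u‖ ^ 2 / (u * Real.log u) := by
  have hpos : ∀ u ∈ Set.Icc (2 : ℝ) b, 0 < u := fun u hu ↦ by linarith [hu.1]
  have hg : ContinuousOn (fun u ↦ δ * u ^ (-δ - 1)) (Set.Icc 2 b) :=
    continuousOn_const.mul <| continuousOn_id.rpow_const fun u hu ↦ Or.inl (hpos u hu).ne'
  have hgw : ContinuousOn (fun u ↦ (δ * u ^ (-δ - 1)) ^ 2 * (u * Real.log u)) (Set.Icc 2 b) :=
    (hg.pow 2).mul <| continuousOn_id.mul <|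
      Real.continuousOn_log.mono fun u hu ↦ (hpos u hu).ne'
  have hweight : ∫ u in Set.Ioc 2 b, (δ * u ^ (-δ - 1)) ^ 2 * (u * Real.log u) ≤ 1 :=
    calc ∫ u in Set.Ioc 2 b, (δ * u ^ (-δ - 1)) ^ 2 * (u * Real.log u)
        ≤ ∫ u in Set.Ioc 2 b, δ * u ^ (-δ - 1) :=
          setIntegral_mono_on (hgw.integrableOn_Icc.mono_set Set.Ioc_subset_Icc_self)
            (hg.integrableOn_Icc.mono_set Set.Ioc_subset_Icc_self) measurableSet_Ioc
            fun u hu ↦ mul_rpow_neg_sub_one_sq_mul_log_le hδ (hpos u (Set.Ioc_subset_Icc_self hu))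
      _ = 2 ^ (-δ) - b ^ (-δ) := setIntegral_mul_rpow_neg_sub_one δ hb
      _ ≤ 1 := by
          have h2 : (2 : ℝ) ^ (-δ) ≤ 1 :=
            Real.rpow_le_one_of_one_le_of_nonpos one_le_two (by linarith)
          linarith [Real.rpow_nonneg (by linarith : (0 : ℝ) ≤ b) (-δ)]
  have hlog : ∀ᵐ u ∂volume.restrict (Set.Ioc 2 b), 0 < u * Real.log u :=
    (ae_restrict_iff' measurableSet_Ioc).2 <| ae_of_all _ fun u hu ↦
      mul_pos (by linarith [hu.1]) (Real.log_pos (by linarith [hu.1]))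
  simp_rw [← Complex.real_smul]
  calc _ ≤ (∫ u in Set.Ioc 2 b, ‖T u‖ ^ 2 / (u * Real.log u)) *
        ∫ u in Set.Ioc 2 b, (δ * u ^ (-δ - 1)) ^ 2 * (u * Real.log u) :=
        sq_norm_integral_smul_le hlog hT
          (hgw.integrableOn_Icc.mono_set Set.Ioc_subset_Icc_self)
    _ ≤ _ := mul_le_of_le_one_right
        (integral_nonneg_of_ae <| hlog.mono fun u hu ↦ by positivity) hweight

theorem natCast_cpow_neg_eq_mul_rpow {n : ℕ} (hn : n ≠ 0) (σ₀ σ t : ℝ) :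
    (n : ℂ) ^ (-(↑σ + I * ↑t)) =
      (n : ℂ) ^ (-(↑σ₀ + I * ↑t)) * (((n : ℝ) ^ (-(σ - σ₀)) : ℝ) : ℂ) := by
  rw [Complex.ofReal_cpow (Nat.cast_nonneg n), Complex.ofReal_natCast,
    ← Complex.cpow_add _ _ (Nat.cast_ne_zero.2 hn)]
  push_cast
  ring_nf

theorem sum_Icc_one_mul_cpow_eq (a : ℕ → ℂ) {N : ℕ} (hN : 1 ≤ N) (σ₀ σ t : ℝ) :
    ∑ n ∈ Finset.Icc 1 N, a n * (n : ℂ) ^ (-(↑σ + I * ↑t)) =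
      a 1 + (((N : ℝ) ^ (-(σ - σ₀)) : ℝ) : ℂ) *
          (∑ n ∈ Finset.Icc 1 N, a n * (n : ℂ) ^ (-(↑σ₀ + I * ↑t)) - a 1) +
        ∫ u in Set.Ioc 2 (N : ℝ), (((σ - σ₀) * u ^ (-(σ - σ₀) - 1) : ℝ) : ℂ) *
          ∑ n ∈ Finset.Icc 2 ⌊u⌋₊, a n * (n : ℂ) ^ (-(↑σ₀ + I * ↑t)) := by
  set b : ℕ → ℂ := fun n ↦ a n * (n : ℂ) ^ (-(↑σ₀ + I * ↑t))
  have hsplit (F : ℕ → ℂ) : ∑ n ∈ Finset.Icc 1 N, F n = F 1 + ∑ n ∈ Finset.Icc 2 N, F n :=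
    (add_sum_Ioc_eq_sum_Icc hN).symm
  have hshift (n : ℕ) (hn : n ∈ Finset.Icc 1 N) :
      a n * (n : ℂ) ^ (-(↑σ + I * ↑t)) = b n * (((n : ℝ) ^ (-(σ - σ₀)) : ℝ) : ℂ) := by
    rw [natCast_cpow_neg_eq_mul_rpow (by simp at hn; omega) σ₀, mul_assoc]
  have hb1 : b 1 = a 1 := by simp [b]
  rw [sum_congr rfl hshift, hsplit, hsplit b, sum_Icc_two_mul_rpow_neg, hb1, Nat.cast_one,
    Real.one_rpow, ofReal_one, mul_one]
  ring

/-- Partial summation bound: with `S(s) = ∑_{n ≤ N} a_n n^{-s}` and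
`S_u(s) = ∑_{2 ≤ n ≤ u} a_n n^{-s}`, for any `σ₀ ≤ σ` and `t ∈ ℝ`,
`|S(σ+it)|² ≪ |a_1|² + |S(σ₀+it)|² + ∫_2^N |S_u(σ₀+it)|² du/(u log u)`
with an absolute implied constant. -/
theorem dirichlet_poly_partial_summation :
    ∃ C : ℝ, 0 < C ∧ ∀ N : ℕ, 2 ≤ N → ∀ a : ℕ → ℂ, ∀ σ₀ σ t : ℝ, σ₀ ≤ σ →
      ‖∑ n ∈ Finset.Icc 1 N, a n * (n : ℂ) ^ (-(↑σ + I * ↑t))‖ ^ 2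
        ≤ C * (‖a 1‖ ^ 2
            + ‖∑ n ∈ Finset.Icc 1 N, a n * (n : ℂ) ^ (-(↑σ₀ + I * ↑t))‖ ^ 2
            + ∫ u in (2 : ℝ)..(N : ℝ),
                ‖∑ n ∈ Finset.Icc 2 ⌊u⌋₊, a n * (n : ℂ) ^ (-(↑σ₀ + I * ↑t))‖ ^ 2
                  / (u * Real.log u)) := by
  refine ⟨12, by norm_num, fun N hN a σ₀ σ t hσ ↦ ?_⟩
  have hN2 : (2 : ℝ) ≤ N := by exact_mod_cast hN
  have hδ : 0 ≤ σ - σ₀ := sub_nonneg.2 hσ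
  set b : ℕ → ℂ := fun n ↦ a n * (n : ℂ) ^ (-(↑σ₀ + I * ↑t))
  set S₀ := ∑ n ∈ Finset.Icc 1 N, b n
  set J := ∫ u in Set.Ioc 2 (N : ℝ), (((σ - σ₀) * u ^ (-(σ - σ₀) - 1) : ℝ) : ℂ) *
    ∑ n ∈ Finset.Icc 2 ⌊u⌋₊, b n
  have hJ : ‖J‖ ^ 2 ≤ ∫ u in (2 : ℝ)..(N : ℝ), ‖∑ n ∈ Finset.Icc 2 ⌊u⌋₊, b n‖ ^ 2
      / (u * Real.log u) := by
    rw [intervalIntegral.integral_of_le hN2]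
    exact sq_norm_setIntegral_mul_rpow_neg_sub_one_mul_le hδ hN2
      (integrableOn_norm_sum_Icc_floor_sq_div b N)
  have hNδ : ‖(((N : ℝ) ^ (-(σ - σ₀)) : ℝ) : ℂ)‖ ≤ 1 := by
    rw [Complex.norm_real, Real.norm_of_nonneg (by positivity)]
    exact Real.rpow_le_one_of_one_le_of_nonpos (by linarith) (by linarith)
  have hnorm : ‖∑ n ∈ Finset.Icc 1 N, a n * (n : ℂ) ^ (-(↑σ + I * ↑t))‖
      ≤ 2 * ‖a 1‖ + ‖S₀‖ + ‖J‖ := by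
    rw [sum_Icc_one_mul_cpow_eq a (by omega) σ₀]
    refine norm_add₃_le.trans ?_
    rw [norm_mul]
    nlinarith [norm_sub_le S₀ (a 1), norm_nonneg (S₀ - a 1)]
  have := pow_le_pow_left₀ (norm_nonneg _) hnorm 2
  nlinarith [sq_nonneg (2 * ‖a 1‖ - ‖S₀‖), sq_nonneg (2 * ‖a 1‖ - ‖J‖), sq_nonneg (‖S₀‖ - ‖J‖)]
end

section
/- Let T be a finite set of real numbers contained in [T₀ + δ/2, T₀ + T − δ/2] with |t − t'| ≥ δ for distinct t, t' ∈ T, and let f : ℝ → ℂ be continuously differentiable. Then ∑_{t ∈ T} |f(t)|² ≪ (1/δ) ∫_{T₀}^{T₀+T} |f(u)|² du + (∫_{T₀}^{T₀+T} |f(u)|² du)^{1/2} · (∫_{T₀}^{T₀+T} |f'(u)|² du)^{1/2}. -/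
open MeasureTheory Set intervalIntegral Interval

/-!
Around each `t ∈ 𝒯` put the window `(t - δ/2, t + δ/2]`; by the spacing these windows are
disjoint, and they lie in `(T₀, T₀ + T]`. A real `C¹` function exceeds its mean over an interval
by at most the total variation `∫ |g'|` there; for `g = ‖f‖²` this gives
`‖f t‖² ≤ δ⁻¹ ∫_{I_t} ‖f‖² + 2 ∫_{I_t} ‖f‖ ‖f'‖`. Summing over the disjoint windows and applying
Cauchy–Schwarz to `∫ ‖f‖ ‖f'‖` gives the bound with `C = 2`.
-/

theorem le_intervalAverage_add_integral_abs_deriv {g g' : ℝ → ℝ} {a b t : ℝ} (hab : a < b)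
    (ht : t ∈ Icc a b) (hg : ∀ x, HasDerivAt g (g' x) x) (hg' : Continuous g') :
    g t ≤ (⨍ x in a..b, g x) + ∫ x in a..b, |g' x| := by
  have hgc : Continuous g := continuous_iff_continuousAt.2 fun x => (hg x).continuousAt
  set B := ∫ x in a..b, |g' x|
  have hpoint : ∀ u ∈ Icc a b, g t ≤ g u + B := by
    intro u hu
    have hsub : Ι u t ⊆ Ι a b := uIoc_subset_uIoc_of_uIcc_subset_uIcc <|
      uIcc_subset_uIcc (Icc_subset_uIcc hu) (Icc_subset_uIcc ht)
    have hB : |∫ x in u..t, g' x| ≤ B := calc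
      _ ≤ ∫ x in Ι u t, |g' x| := by
        simpa only [Real.norm_eq_abs] using norm_integral_le_integral_norm_uIoc (f := g')
      _ ≤ ∫ x in Ι a b, |g' x| := setIntegral_mono_set (hg'.abs.integrableOn_Ioc)
          (.of_forall fun x => abs_nonneg _) hsub.eventuallyLE
      _ = B := by rw [uIoc_of_le hab.le, ← integral_of_le hab.le]
    rw [integral_eq_sub_of_hasDerivAt (fun x _ => hg x) (hg'.intervalIntegrable u t)] at hB
    linarith [le_abs_self (g t - g u)]
  have hint : ∫ _ in a..b, g t ≤ ∫ u in a..b, (g u + B) :=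
    integral_mono_on hab.le intervalIntegrable_const
      ((hgc.intervalIntegrable a b).add intervalIntegrable_const) hpoint
  rw [intervalIntegral.integral_const,
    integral_add (hgc.intervalIntegrable a b) intervalIntegrable_const,
    intervalIntegral.integral_const, smul_eq_mul, smul_eq_mul] at hint
  have hlen := sub_pos.2 hab
  rw [interval_average_eq, smul_eq_mul, inv_mul_eq_div, div_add' _ _ _ hlen.ne',
    le_div_iff₀ hlen]
  linarith

theorem sq_norm_le_intervalAverage_add_two_mul_integral {E : Type*} [NormedAddCommGroup E]
    [InnerProductSpace ℝ E] {f : ℝ → E} (hf : ContDiff ℝ 1 f) {a b t : ℝ} (hab : a < b)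
    (ht : t ∈ Icc a b) :
    ‖f t‖ ^ 2 ≤ (⨍ x in a..b, ‖f x‖ ^ 2) + 2 * ∫ x in a..b, ‖f x‖ * ‖deriv f x‖ := by
  have hf' : Continuous (deriv f) := hf.continuous_deriv le_rfl
  refine (le_intervalAverage_add_integral_abs_deriv hab ht
    (fun x => ((hf.differentiable one_ne_zero) x).hasDerivAt.norm_sq)
    (continuous_const.mul (hf.continuous.inner hf'))).trans ?_
  rw [← intervalIntegral.integral_const_mul]
  gcongr
  refine integral_mono_on hab.le (Continuous.intervalIntegrable (by fun_prop) a b)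
    (Continuous.intervalIntegrable (by fun_prop) a b) fun x _ => ?_
  rw [abs_mul, abs_two]
  gcongr
  exact abs_real_inner_le_norm _ _

theorem sum_setIntegral_le_setIntegral_of_pairwiseDisjoint {α ι : Type*} [MeasurableSpace α]
    {μ : Measure α} (s : Finset ι) {A : ι → Set α} {S : Set α} (hA : ∀ i ∈ s, MeasurableSet (A i))
    (hdisj : (s : Set ι).PairwiseDisjoint A) (hAS : ∀ i ∈ s, A i ⊆ S) {h : α → ℝ}
    (h0 : 0 ≤ᵐ[μ.restrict S] h) (hint : IntegrableOn h S μ) :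
    ∑ i ∈ s, ∫ x in A i, h x ∂μ ≤ ∫ x in S, h x ∂μ := by
  rw [← integral_biUnion_finset s hA hdisj fun i hi => hint.mono_set (hAS i hi)]
  exact setIntegral_mono_set hint h0 (iUnion₂_subset hAS).eventuallyLE

theorem disjoint_Ioc_of_le_abs_sub {t t' δ : ℝ} (h : δ ≤ |t - t'|) :
    Disjoint (Ioc (t - δ / 2) (t + δ / 2)) (Ioc (t' - δ / 2) (t' + δ / 2)) := by
  rcases le_abs'.1 h with h | h
  · exact Ioc_disjoint_Ioc_of_le (by linarith)
  · exact (Ioc_disjoint_Ioc_of_le (by linarith)).symm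

theorem sum_integral_le_integral_of_separated {𝒯 : Finset ℝ} {a b δ : ℝ} (hab : a ≤ b)
    (hδ : 0 ≤ δ) (hloc : ∀ t ∈ 𝒯, a + δ / 2 ≤ t ∧ t ≤ b - δ / 2)
    (hsep : ∀ t ∈ 𝒯, ∀ t' ∈ 𝒯, t ≠ t' → δ ≤ |t - t'|) {h : ℝ → ℝ} (h0 : ∀ x, 0 ≤ h x)
    (hint : IntegrableOn h (Ioc a b)) :
    ∑ t ∈ 𝒯, ∫ x in t - δ / 2..t + δ / 2, h x ≤ ∫ x in a..b, h x := by
  rw [integral_of_le hab, Finset.sum_congr rfl fun t _ => integral_of_le (by linarith)]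
  exact sum_setIntegral_le_setIntegral_of_pairwiseDisjoint 𝒯 (fun _ _ => measurableSet_Ioc)
    (fun t ht t' ht' hne => disjoint_Ioc_of_le_abs_sub (hsep t ht t' ht' hne))
    (fun t ht => Ioc_subset_Ioc (by linarith [hloc t ht]) (by linarith [hloc t ht]))
    (.of_forall h0) hint

theorem integral_mul_le_L2_mul_L2_of_nonneg {g h : ℝ → ℝ} {a b : ℝ} (hab : a ≤ b)
    (hg : Continuous g) (hh : Continuous h) (hg0 : ∀ x, 0 ≤ g x) (hh0 : ∀ x, 0 ≤ h x) :
    ∫ x in a..b, g x * h x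
      ≤ (∫ x in a..b, g x ^ 2) ^ (1 / 2 : ℝ) * (∫ x in a..b, h x ^ 2) ^ (1 / 2 : ℝ) := by
  have memLp_two {k : ℝ → ℝ} (hk : Continuous k) :
      MemLp k (ENNReal.ofReal 2) (volume.restrict (Ioc a b)) := by
    rw [ENNReal.ofReal_ofNat, memLp_two_iff_integrable_sq hk.aestronglyMeasurable]
    exact (hk.pow 2).integrableOn_Ioc
  simp only [integral_of_le hab]
  simpa only [Real.rpow_two] using integral_mul_le_Lp_mul_Lq_of_nonneg
    Real.HolderConjugate.two_two (.of_forall hg0) (.of_forall hh0) (memLp_two hg) (memLp_two hh)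

theorem sum_sq_norm_le_of_separated {E : Type*} [NormedAddCommGroup E] [InnerProductSpace ℝ E]
    {f : ℝ → E} (hf : ContDiff ℝ 1 f) {𝒯 : Finset ℝ} {a b δ : ℝ} (hab : a ≤ b) (hδ : 0 < δ)
    (hloc : ∀ t ∈ 𝒯, a + δ / 2 ≤ t ∧ t ≤ b - δ / 2)
    (hsep : ∀ t ∈ 𝒯, ∀ t' ∈ 𝒯, t ≠ t' → δ ≤ |t - t'|) :
    ∑ t ∈ 𝒯, ‖f t‖ ^ 2
      ≤ δ⁻¹ * (∫ x in a..b, ‖f x‖ ^ 2) + 2 * ∫ x in a..b, ‖f x‖ * ‖deriv f x‖ := by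
  calc ∑ t ∈ 𝒯, ‖f t‖ ^ 2
      ≤ ∑ t ∈ 𝒯, (δ⁻¹ * (∫ x in t - δ / 2..t + δ / 2, ‖f x‖ ^ 2)
          + 2 * ∫ x in t - δ / 2..t + δ / 2, ‖f x‖ * ‖deriv f x‖) := by
        refine Finset.sum_le_sum fun t _ => ?_
        have := sq_norm_le_intervalAverage_add_two_mul_integral hf (t := t)
          (by linarith : t - δ / 2 < t + δ / 2) ⟨by linarith, by linarith⟩
        rwa [interval_average_eq, smul_eq_mul, show t + δ / 2 - (t - δ / 2) = δ by ring] at this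
    _ = δ⁻¹ * ∑ t ∈ 𝒯, (∫ x in t - δ / 2..t + δ / 2, ‖f x‖ ^ 2)
          + 2 * ∑ t ∈ 𝒯, ∫ x in t - δ / 2..t + δ / 2, ‖f x‖ * ‖deriv f x‖ := by
        rw [Finset.sum_add_distrib, Finset.mul_sum, Finset.mul_sum]
    _ ≤ _ := by
        gcongr <;> refine sum_integral_le_integral_of_separated hab hδ.le hloc hsep
          (fun x => by positivity) (Continuous.integrableOn_Ioc (by fun_prop))

/-- Gallagher-type lemma: for a well-spaced finite set `𝒯 ⊆ [T₀+δ/2, T₀+T−δ/2]` and a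
continuously differentiable `f`,
`∑_{t ∈ 𝒯} |f(t)|² ≪ (1/δ)∫|f|² + (∫|f|²)^{1/2}(∫|f'|²)^{1/2}`. -/
theorem gallagher_well_spaced :
    ∃ C : ℝ, 0 < C ∧ ∀ T₀ T δ : ℝ, 0 < δ → δ < T → ∀ 𝒯 : Finset ℝ,
      (∀ t ∈ 𝒯, T₀ + δ / 2 ≤ t ∧ t ≤ T₀ + T - δ / 2) →
      (∀ t ∈ 𝒯, ∀ t' ∈ 𝒯, t ≠ t' → δ ≤ |t - t'|) →
      ∀ f : ℝ → ℂ, ContDiff ℝ 1 f →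
        (∑ t ∈ 𝒯, ‖f t‖ ^ 2)
          ≤ C * ((1 / δ) * (∫ u in T₀..(T₀ + T), ‖f u‖ ^ 2)
              + (∫ u in T₀..(T₀ + T), ‖f u‖ ^ 2) ^ ((1 : ℝ) / 2)
                * (∫ u in T₀..(T₀ + T), ‖deriv f u‖ ^ 2) ^ ((1 : ℝ) / 2)) := by
  refine ⟨2, two_pos, fun T₀ T δ hδ hδT 𝒯 hloc hsep f hf => ?_⟩
  have hab : T₀ ≤ T₀ + T := by linarith
  have hsum := sum_sq_norm_le_of_separated hf hab hδ hloc hsep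
  have hCS := integral_mul_le_L2_mul_L2_of_nonneg hab hf.continuous.norm
    (hf.continuous_deriv le_rfl).norm (fun _ => norm_nonneg _) (fun _ => norm_nonneg _)
  have hmass : 0 ≤ δ⁻¹ * ∫ u in T₀..(T₀ + T), ‖f u‖ ^ 2 :=
    mul_nonneg (inv_nonneg.2 hδ.le) (integral_nonneg hab fun _ _ => by positivity)
  rw [one_div]
  linarith
end
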